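/- Let X : ℝ → ℝ be continuous and nondecreasing, fix t ≥ 0, let φ : ℝ → ℝ be nonnegative and Lebesgue integrable on [0, t], and let U ⊆ (0, ∞) be an open set such that (0, t) \ U has Lebesgue measure zero. Suppose that for all real numbers s ≤ u with [s, u] ⊆ U one has X(u) − X(s) = ∫_s^u φ(v) dv. Then ∫_0^t φ(v) dv ≤ X(t) − X(0). -/

import Mathlib

/-!
Let `V = (0, t) ∩ U`. Since `V` has full measure in `(0, t)`, `∫₀ᵗ φ` is the limit of `∫_K φ`
over compact sets `K ⊆ V` exhausting `V`. A compact `K ⊆ U` has a thickening of some width `δ`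
still inside `U`, so in a partition of `[0, t]` of mesh `< δ` every cell meeting `K` lies in `U`:
there `∫ 1_K φ ≤ ∫ φ` is the increment of `X`, and on the other cells `∫ 1_K φ = 0` while the
increment of the monotone `X` is nonnegative. Summing over the cells gives `∫_K φ ≤ X t - X 0`.
-/

open MeasureTheory Set

theorem intervalIntegral_le_sub_of_forall_sub_lt {X g : ℝ → ℝ} {a b δ : ℝ} (hab : a ≤ b)
    (hδ : 0 < δ) (hg : IntervalIntegrable g volume a b)
    (h : ∀ s u, a ≤ s → s ≤ u → u ≤ b → u - s < δ → ∫ v in s..u, g v ≤ X u - X s) :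
    ∫ v in a..b, g v ≤ X b - X a := by
  obtain ⟨N, hN⟩ := exists_nat_gt ((b - a) / δ)
  have hNpos : (0 : ℝ) < N := (div_nonneg (sub_nonneg.2 hab) hδ.le).trans_lt hN
  set p : ℕ → ℝ := fun i => a + i * ((b - a) / N) with hp
  have hstep : 0 ≤ (b - a) / N := div_nonneg (sub_nonneg.2 hab) hNpos.le
  have hmesh : (b - a) / N < δ := by
    rw [div_lt_iff₀ hNpos]
    rw [div_lt_iff₀ hδ] at hN
    linarith
  have hp0 : p 0 = a := by simp [hp]
  have hpN : p N = b := by simp only [hp]; field_simp; ring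
  have hp_mem : ∀ i ≤ N, a ≤ p i ∧ p i ≤ b := fun i hi => by
    have : (i : ℝ) * ((b - a) / N) ≤ N * ((b - a) / N) :=
      mul_le_mul_of_nonneg_right (Nat.cast_le.2 hi) hstep
    rw [mul_div_cancel₀ _ hNpos.ne'] at this
    exact ⟨le_add_of_nonneg_right (by positivity), by linarith⟩
  have hp_succ : ∀ i, p (i + 1) = p i + (b - a) / N := fun i => by
    simp only [hp]; push_cast; ring
  have hcell : ∀ i < N, uIcc (p i) (p (i + 1)) ⊆ uIcc a b := fun i hi =>
    uIcc_subset_uIcc (mem_uIcc_of_le (hp_mem i hi.le).1 (hp_mem i hi.le).2)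
      (mem_uIcc_of_le (hp_mem (i + 1) hi).1 (hp_mem (i + 1) hi).2)
  calc ∫ v in a..b, g v = ∑ i ∈ Finset.range N, ∫ v in p i..p (i + 1), g v := by
        rw [intervalIntegral.sum_integral_adjacent_intervals fun i hi => hg.mono_set (hcell i hi),
          hp0, hpN]
    _ ≤ ∑ i ∈ Finset.range N, (X (p (i + 1)) - X (p i)) := by
        refine Finset.sum_le_sum fun i hi => ?_
        have hi := Finset.mem_range.1 hi
        exact h _ _ (hp_mem i hi.le).1 (by rw [hp_succ]; linarith) (hp_mem (i + 1) hi).2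
          (by rw [hp_succ]; linarith)
    _ = X b - X a := by rw [Finset.sum_range_sub (fun i => X (p i)), hp0, hpN]

theorem intervalIntegral_indicator_le_sub_of_isCompact {X φ : ℝ → ℝ} {U K : Set ℝ} {a b : ℝ}
    (hX : Monotone X) (hφ0 : ∀ v, 0 ≤ φ v) (hφ : IntervalIntegrable φ volume a b)
    (hU : IsOpen U) (hK : IsCompact K) (hKU : K ⊆ U)
    (hinc : ∀ s u, s ≤ u → Icc s u ⊆ U → ∫ v in s..u, φ v ≤ X u - X s) (hab : a ≤ b) :
    ∫ v in a..b, K.indicator φ v ≤ X b - X a := by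
  obtain ⟨δ, hδ, hδU⟩ := hK.exists_thickening_subset_open hU hKU
  have hKm : MeasurableSet K := hK.isClosed.measurableSet
  have hint : ∀ {s u}, IntervalIntegrable φ volume s u →
      IntervalIntegrable (K.indicator φ) volume s u := fun h =>
    intervalIntegrable_iff.2 ((intervalIntegrable_iff.1 h).indicator hKm)
  refine intervalIntegral_le_sub_of_forall_sub_lt hab hδ (hint hφ) fun s u has hsu hub hδsu => ?_
  have hφsu : IntervalIntegrable φ volume s u :=
    hφ.mono_set (uIcc_subset_uIcc (mem_uIcc_of_le has (hsu.trans hub))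
      (mem_uIcc_of_le (has.trans hsu) hub))
  by_cases hmeet : (Icc s u ∩ K).Nonempty
  · obtain ⟨x, hxI, hxK⟩ := hmeet
    have hsuU : Icc s u ⊆ U := fun y hy => hδU <| Metric.ball_subset_thickening hxK δ <| by
      rw [Metric.mem_ball, Real.dist_eq, abs_sub_lt_iff]
      constructor <;> linarith [hy.1, hy.2, hxI.1, hxI.2]
    calc ∫ v in s..u, K.indicator φ v ≤ ∫ v in s..u, φ v :=
          intervalIntegral.integral_mono_on hsu (hint hφsu) hφsu fun v _ =>
            indicator_le_self' (fun v _ => hφ0 v) v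
      _ ≤ X u - X s := hinc s u hsu hsuU
  · have hzero : ∫ v in s..u, K.indicator φ v = 0 := by
      rw [← intervalIntegral.integral_zero]
      refine intervalIntegral.integral_congr fun v hv => ?_
      rw [uIcc_of_le hsu] at hv
      exact indicator_of_notMem (fun hvK => hmeet ⟨v, hv, hvK⟩) φ
    rw [hzero]
    exact sub_nonneg.2 (hX hsu)

theorem integral_le_increment_general (X : ℝ → ℝ) (hXm : Monotone X)
    (t : ℝ) (ht : 0 ≤ t)
    (φ : ℝ → ℝ) (hφ0 : ∀ v, 0 ≤ φ v) (hφint : IntegrableOn φ (Set.Icc 0 t))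
    (U : Set ℝ) (hUopen : IsOpen U)
    (hUfull : volume (Set.Ioo 0 t \ U) = 0)
    (hinc : ∀ s u : ℝ, s ≤ u → Set.Icc s u ⊆ U → X u - X s = ∫ v in s..u, φ v) :
    (∫ v in (0 : ℝ)..t, φ v) ≤ X t - X 0 := by
  have hfull : ∫ v in (0 : ℝ)..t, φ v = ∫ v in Ioo 0 t ∩ U, φ v := by
    rw [intervalIntegral.integral_of_le ht, integral_Ioc_eq_integral_Ioo,
      ← sdiff_sdiff_right_self]
    exact setIntegral_congr_set (sdiff_null_ae_eq_self hUfull).symm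
  obtain ⟨K, hKclosed, hKsub, hKunion, hKmono⟩ := (isOpen_Ioo.inter hUopen).exists_iUnion_isClosed
  have hKIoc : ∀ n, K n ⊆ Ioc 0 t := fun n =>
    (hKsub n).trans (inter_subset_left.trans Ioo_subset_Ioc_self)
  have hKcompact : ∀ n, IsCompact (K n) := fun n =>
    Metric.isCompact_of_isClosed_isBounded (hKclosed n)
      ((Metric.isBounded_Ioc 0 t).subset (hKIoc n))
  have hlim := tendsto_setIntegral_of_monotone (f := φ) (μ := volume)
    (fun n => (hKclosed n).measurableSet) hKmono
    (hKunion ▸ hφint.mono_set (inter_subset_left.trans Ioo_subset_Icc_self))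
  rw [hKunion, ← hfull] at hlim
  refine le_of_tendsto hlim (Filter.Eventually.of_forall fun n => ?_)
  calc ∫ v in K n, φ v = ∫ v in (0 : ℝ)..t, (K n).indicator φ v := by
        rw [intervalIntegral.integral_of_le ht, setIntegral_indicator (hKclosed n).measurableSet,
          inter_eq_right.2 (hKIoc n)]
    _ ≤ X t - X 0 :=
        intervalIntegral_indicator_le_sub_of_isCompact hXm hφ0
          ((intervalIntegrable_iff_integrableOn_Icc_of_le ht).2 hφint) hUopen (hKcompact n)
          ((hKsub n).trans inter_subset_right) (fun s u hsu hsuU => (hinc s u hsu hsuU).ge) ht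

/-- If a continuous nondecreasing `X` has increments given by
integrating a nonnegative integrable `φ` on every closed interval contained in
an open set `U ⊆ (0, ∞)` of full measure in `(0, t)`, then
`∫₀ᵗ φ ≤ X t − X 0`. -/
theorem integral_le_increment (X : ℝ → ℝ) (hXc : Continuous X) (hXm : Monotone X)
    (t : ℝ) (ht : 0 ≤ t)
    (φ : ℝ → ℝ) (hφ0 : ∀ v, 0 ≤ φ v) (hφint : IntegrableOn φ (Set.Icc 0 t))
    (U : Set ℝ) (hU : U ⊆ Set.Ioi (0 : ℝ)) (hUopen : IsOpen U)
    (hUfull : volume (Set.Ioo 0 t \ U) = 0)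
    (hinc : ∀ s u : ℝ, s ≤ u → Set.Icc s u ⊆ U → X u - X s = ∫ v in s..u, φ v) :
    (∫ v in (0 : ℝ)..t, φ v) ≤ X t - X 0 :=
  integral_le_increment_general X hXm t ht φ hφ0 hφint U hUopen hUfull hinc
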